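/- arXiv:1706.04003 — 4 statements merged into one kernel-verified Lean document; each statement's English description precedes it below -/
import Mathlib

section
/- Let (F, G) be a dual pair for H, and let U and V be bounded operators on H such that V U* = I_H. Then the mappings U∘F : ω ↦ U(F(ω)) and V∘G : ω ↦ V(G(ω)) are Bessel mappings and (U∘F, V∘G) is a dual pair for H. -/
/-! Every coefficient ⟨f, T (F ω)⟩ equals ⟨T* f, F ω⟩, so composing with `T` turns Bessel bounds
into Bessel bounds (as ‖T*‖ = ‖T‖), and the dual-pair identity for `F, G` applied to `U* f, V* g`
gives ∫ ⟨f, U F ω⟩⟨V G ω, g⟩ dμ = ⟨U* f, V* g⟩ = ⟨V U* f, g⟩ = ⟨f, g⟩. -/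

open MeasureTheory
open scoped ENNReal

noncomputable section

variable {H : Type*} [NormedAddCommGroup H] [InnerProductSpace ℂ H] [CompleteSpace H]
variable {Ω : Type*} [MeasurableSpace Ω]

/-- A map `F : Ω → H` is weakly measurable if `ω ↦ ⟨f, F ω⟩` is measurable for every `f ∈ H`. -/
def WeaklyMeasurableMap (F : Ω → H) : Prop :=
  ∀ f : H, Measurable fun ω => (inner ℂ f (F ω) : ℂ)

/-- `F` is a Bessel mapping for `H` with respect to `(Ω, μ)` with Bessel bound `B`:
it is weakly measurable and `∫ |⟨f, F ω⟩|² dμ ≤ B ‖f‖²` for all `f`. -/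
def IsBesselMapping (μ : Measure Ω) (F : Ω → H) (B : ℝ) : Prop :=
  WeaklyMeasurableMap F ∧ ∀ f : H, ∫ ω, ‖(inner ℂ f (F ω) : ℂ)‖ ^ 2 ∂μ ≤ B * ‖f‖ ^ 2

/-- `F` is a continuous frame for `H` with respect to `(Ω, μ)` with bounds `0 < A ≤ B`. -/
def IsContinuousFrame (μ : Measure Ω) (F : Ω → H) (A B : ℝ) : Prop :=
  WeaklyMeasurableMap F ∧ 0 < A ∧ A ≤ B ∧
    ∀ f : H, A * ‖f‖ ^ 2 ≤ ∫ ω, ‖(inner ℂ f (F ω) : ℂ)‖ ^ 2 ∂μ ∧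
      ∫ ω, ‖(inner ℂ f (F ω) : ℂ)‖ ^ 2 ∂μ ≤ B * ‖f‖ ^ 2

section

variable {K : Type*} [NormedAddCommGroup K] [InnerProductSpace ℂ K] [CompleteSpace K]

def IsDualPair (μ : Measure Ω) (F G : Ω → H) : Prop :=
  ∀ f g : H, (inner ℂ f g : ℂ) = ∫ ω, (inner ℂ f (F ω) : ℂ) * (inner ℂ (G ω) g : ℂ) ∂μ

open ContinuousLinearMap

theorem WeaklyMeasurableMap.clm_comp {F : Ω → H} (hF : WeaklyMeasurableMap F) (T : H →L[ℂ] K) :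
    WeaklyMeasurableMap fun ω => T (F ω) := by
  intro f
  simpa only [adjoint_inner_left] using hF (adjoint T f)

theorem IsBesselMapping.clm_comp {μ : Measure Ω} {F : Ω → H} {B : ℝ}
    (hF : IsBesselMapping μ F B) (T : H →L[ℂ] K) :
    IsBesselMapping μ (fun ω => T (F ω)) (|B| * ‖T‖ ^ 2) := by
  refine ⟨hF.1.clm_comp T, fun f => ?_⟩
  have hadj : ‖adjoint T f‖ ≤ ‖T‖ * ‖f‖ := by
    simpa only [LinearIsometryEquiv.norm_map] using (adjoint T).le_opNorm f
  calc ∫ ω, ‖(inner ℂ f (T (F ω)) : ℂ)‖ ^ 2 ∂μ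
      = ∫ ω, ‖(inner ℂ (adjoint T f) (F ω) : ℂ)‖ ^ 2 ∂μ := by simp only [adjoint_inner_left]
    _ ≤ B * ‖adjoint T f‖ ^ 2 := hF.2 _
    _ ≤ |B| * (‖T‖ * ‖f‖) ^ 2 := by gcongr; exact le_abs_self B
    _ = |B| * ‖T‖ ^ 2 * ‖f‖ ^ 2 := by ring

theorem IsDualPair.clm_comp {μ : Measure Ω} {F G : Ω → H} (hFG : IsDualPair μ F G)
    {U V : H →L[ℂ] K} (hUV : V ∘L adjoint U = 1) :
    IsDualPair μ (fun ω => U (F ω)) (fun ω => V (G ω)) := by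
  intro f g
  calc (inner ℂ f g : ℂ)
      = inner ℂ ((V ∘L adjoint U) f) g := by rw [hUV, one_apply_eq_self]
    _ = inner ℂ (adjoint U f) (adjoint V g) := by rw [comp_apply, adjoint_inner_right]
    _ = ∫ ω, (inner ℂ f (U (F ω)) : ℂ) * (inner ℂ (V (G ω)) g : ℂ) ∂μ := by
      rw [hFG]
      simp only [adjoint_inner_left, adjoint_inner_right]

end

/-- if `(F, G)` is a dual pair and `U, V` are bounded operators with
`V U* = I`, then `(U∘F, V∘G)` is a dual pair. -/
theorem statement4 {μ : Measure Ω} (F G : Ω → H) (B_F B_G : ℝ)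
    (hF : IsBesselMapping μ F B_F) (hG : IsBesselMapping μ G B_G)
    (hdual : ∀ f g : H, (inner ℂ f g : ℂ) =
      ∫ ω, (inner ℂ f (F ω) : ℂ) * (inner ℂ (G ω) g : ℂ) ∂μ)
    (U V : H →L[ℂ] H) (hUV : V ∘L ContinuousLinearMap.adjoint U = 1) :
    (∃ B : ℝ, IsBesselMapping μ (fun ω => U (F ω)) B) ∧
    (∃ B : ℝ, IsBesselMapping μ (fun ω => V (G ω)) B) ∧
    ∀ f g : H, (inner ℂ f g : ℂ) =
      ∫ ω, (inner ℂ f (U (F ω)) : ℂ) * (inner ℂ (V (G ω)) g : ℂ) ∂μ :=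
  ⟨⟨_, hF.clm_comp U⟩, ⟨_, hG.clm_comp V⟩, IsDualPair.clm_comp hdual hUV⟩
end
end

section
/- Let (F, G) be a dual pair for H and let U be a bounded operator on H such that (F, U∘G), where (U∘G)(ω) = U(G(ω)), is also a dual pair for H. Then U = I_H. -/
open MeasureTheory
open scoped ENNReal

noncomputable section

variable {H : Type*} [NormedAddCommGroup H] [InnerProductSpace ℂ H] [CompleteSpace H]
variable {Ω : Type*} [MeasurableSpace Ω]

theorem statement6_general {μ : Measure Ω} (F G : Ω → H)
    (hdual : ∀ f g : H, (inner ℂ f g : ℂ) =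
      ∫ ω, (inner ℂ f (F ω) : ℂ) * (inner ℂ (G ω) g : ℂ) ∂μ)
    (U : H →L[ℂ] H)
    (hdualU : ∀ f g : H, (inner ℂ f g : ℂ) =
      ∫ ω, (inner ℂ f (F ω) : ℂ) * (inner ℂ (U (G ω)) g : ℂ) ∂μ) :
    U = 1 := by
  ext f
  refine ext_inner_right ℂ fun g => ?_
  calc (inner ℂ (U f) g : ℂ)
      = inner ℂ f (U.adjoint g) := (U.adjoint_inner_right f g).symm
    _ = ∫ ω, (inner ℂ f (F ω) : ℂ) * (inner ℂ (G ω) (U.adjoint g) : ℂ) ∂μ := hdual _ _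
    _ = ∫ ω, (inner ℂ f (F ω) : ℂ) * (inner ℂ (U (G ω)) g : ℂ) ∂μ := by
      simp only [ContinuousLinearMap.adjoint_inner_right]
    _ = inner ℂ f g := (hdualU f g).symm

/-- if `(F, G)` and `(F, U∘G)` are both dual pairs for a bounded operator
`U`, then `U = I`. -/
theorem statement6 {μ : Measure Ω} (F G : Ω → H) (B_F B_G : ℝ)
    (hF : IsBesselMapping μ F B_F) (hG : IsBesselMapping μ G B_G)
    (hdual : ∀ f g : H, (inner ℂ f g : ℂ) =
      ∫ ω, (inner ℂ f (F ω) : ℂ) * (inner ℂ (G ω) g : ℂ) ∂μ)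
    (U : H →L[ℂ] H)
    (hdualU : ∀ f g : H, (inner ℂ f g : ℂ) =
      ∫ ω, (inner ℂ f (F ω) : ℂ) * (inner ℂ (U (G ω)) g : ℂ) ∂μ) :
    U = 1 :=
  statement6_general F G hdual U hdualU
end
end

section
/- If F and G are approximately dual continuous frames with Bessel bounds B_F and B_G respectively, then both F and G are continuous frames for H with respect to (Ω, μ); more precisely, F is a continuous frame with lower bound B_G⁻¹·(1 − ‖I_H − T_G T_F*‖)² and G is a continuous frame with lower bound B_F⁻¹·(1 − ‖I_H − T_G T_F*‖)². -/
open MeasureTheory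
open scoped ENNReal

noncomputable section

variable {H : Type*} [NormedAddCommGroup H] [InnerProductSpace ℂ H] [CompleteSpace H]
variable {Ω : Type*} [MeasurableSpace Ω]

/-- `T` is the synthesis operator of the Bessel mapping `F`: its adjoint (the analysis
operator) satisfies `(T* f)(ω) = ⟨f, F ω⟩` for `μ`-a.e. `ω`, for every `f ∈ H`. -/
def IsSynthesisOperator (μ : Measure Ω) (F : Ω → H) (T : Lp ℂ 2 μ →L[ℂ] H) : Prop :=
  ∀ f : H, (ContinuousLinearMap.adjoint T f : Ω → ℂ) =ᵐ[μ] fun ω => (inner ℂ f (F ω) : ℂ)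

/-!
Write `ε = ‖I - T_G T_F*‖`. For every `f`,
`‖f‖ ≤ ‖f - T_G T_F* f‖ + ‖T_G T_F* f‖ ≤ ε ‖f‖ + ‖T_G‖ ‖T_F* f‖`, and the Bessel bound gives
`‖T_G‖ ≤ √B_G`, while `‖T_F* f‖²` is exactly the frame integral `∫ |⟨f, F ω⟩|²`. Squaring yields
the lower bound for `F`. Since `I - T_F T_G*` is the adjoint of `I - T_G T_F*`, it has the same
norm, and the same argument with the roles of `F` and `G` swapped gives the lower bound for `G`.
-/

namespace ContinuousLinearMap

variable {𝕜 E K : Type*} [RCLike 𝕜]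

section Normed

variable [NormedAddCommGroup E] [NormedSpace 𝕜 E] [NormedAddCommGroup K] [NormedSpace 𝕜 K]

theorem one_sub_norm_one_sub_comp_mul_norm_le (U : E →L[𝕜] K) (V : K →L[𝕜] E) (x : E) :
    (1 - ‖1 - V ∘L U‖) * ‖x‖ ≤ ‖V‖ * ‖U x‖ := by
  have hdefect : ‖x - V (U x)‖ ≤ ‖1 - V ∘L U‖ * ‖x‖ := by
    simpa using (1 - V ∘L U).le_opNorm x
  have hsplit : ‖x‖ ≤ ‖x - V (U x)‖ + ‖V (U x)‖ := norm_le_norm_sub_add x (V (U x))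
  linarith [V.le_opNorm (U x)]

theorem inv_mul_one_sub_norm_one_sub_comp_sq_le (U : E →L[𝕜] K) (V : K →L[𝕜] E) {B : ℝ}
    (hV : ‖V‖ ≤ √B) (hε : ‖1 - V ∘L U‖ ≤ 1) (x : E) :
    B⁻¹ * (1 - ‖1 - V ∘L U‖) ^ 2 * ‖x‖ ^ 2 ≤ ‖U x‖ ^ 2 := by
  rcases le_or_gt B 0 with hB | hB
  · have : B⁻¹ * ((1 - ‖1 - V ∘L U‖) ^ 2 * ‖x‖ ^ 2) ≤ 0 :=
      mul_nonpos_of_nonpos_of_nonneg (inv_nonpos.2 hB) (by positivity)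
    linarith [sq_nonneg ‖U x‖]
  · have hbound : (1 - ‖1 - V ∘L U‖) * ‖x‖ ≤ √B * ‖U x‖ :=
      (one_sub_norm_one_sub_comp_mul_norm_le U V x).trans
        (mul_le_mul_of_nonneg_right hV (norm_nonneg _))
    have hsq : ((1 - ‖1 - V ∘L U‖) * ‖x‖) ^ 2 ≤ (√B * ‖U x‖) ^ 2 :=
      pow_le_pow_left₀ (mul_nonneg (by linarith) (norm_nonneg x)) hbound 2
    rw [mul_pow, mul_pow, Real.sq_sqrt hB.le] at hsq
    rw [mul_assoc, inv_mul_le_iff₀ hB]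
    exact hsq

end Normed

variable [NormedAddCommGroup E] [InnerProductSpace 𝕜 E] [CompleteSpace E]
  [NormedAddCommGroup K] [InnerProductSpace 𝕜 K] [CompleteSpace K]

theorem norm_one_sub_comp_adjoint_comm (S T : K →L[𝕜] E) :
    ‖1 - S ∘L adjoint T‖ = ‖1 - T ∘L adjoint S‖ := by
  have hadj : adjoint (1 - T ∘L adjoint S) = 1 - S ∘L adjoint T := by
    rw [map_sub, adjoint_comp, adjoint_adjoint, one_def, adjoint_id]
  rw [← hadj, LinearIsometryEquiv.norm_map]

theorem norm_le_sqrt_of_norm_adjoint_apply_sq_le (T : K →L[𝕜] E) {B : ℝ}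
    (h : ∀ f, ‖adjoint T f‖ ^ 2 ≤ B * ‖f‖ ^ 2) : ‖T‖ ≤ √B := by
  rw [← LinearIsometryEquiv.norm_map adjoint T]
  refine opNorm_le_bound _ (Real.sqrt_nonneg B) fun f => ?_
  calc ‖adjoint T f‖ = √(‖adjoint T f‖ ^ 2) := (Real.sqrt_sq (norm_nonneg _)).symm
    _ ≤ √(B * ‖f‖ ^ 2) := Real.sqrt_le_sqrt (h f)
    _ = √B * ‖f‖ := by rw [Real.sqrt_mul' B (sq_nonneg _), Real.sqrt_sq (norm_nonneg f)]

end ContinuousLinearMap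

theorem MeasureTheory.L2.norm_sq_eq_integral_norm_sq {α 𝕜 E : Type*} [MeasurableSpace α]
    {μ : Measure α} [RCLike 𝕜] [NormedAddCommGroup E] [InnerProductSpace 𝕜 E]
    (φ : α →₂[μ] E) : ‖φ‖ ^ 2 = ∫ a, ‖φ a‖ ^ 2 ∂μ := by
  rw [@norm_sq_eq_re_inner 𝕜, L2.inner_def, ← integral_re (L2.integrable_inner φ φ)]
  exact integral_congr_ae (Filter.Eventually.of_forall fun a => inner_self_eq_norm_sq (φ a))

section Frames

variable {μ : Measure Ω}

theorem IsSynthesisOperator.integral_norm_inner_sq {F : Ω → H} {T : Lp ℂ 2 μ →L[ℂ] H}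
    (hT : IsSynthesisOperator μ F T) (f : H) :
    ∫ ω, ‖(inner ℂ f (F ω) : ℂ)‖ ^ 2 ∂μ = ‖ContinuousLinearMap.adjoint T f‖ ^ 2 := by
  rw [L2.norm_sq_eq_integral_norm_sq (𝕜 := ℂ)]
  exact (integral_congr_ae ((hT f).mono fun ω h => by rw [h])).symm

theorem IsBesselMapping.norm_synthesis_le_sqrt {F : Ω → H} {B : ℝ} {T : Lp ℂ 2 μ →L[ℂ] H}
    (hF : IsBesselMapping μ F B) (hT : IsSynthesisOperator μ F T) : ‖T‖ ≤ √B :=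
  ContinuousLinearMap.norm_le_sqrt_of_norm_adjoint_apply_sq_le T fun f =>
    hT.integral_norm_inner_sq f ▸ hF.2 f

theorem lower_frame_bound_of_approx_dual {F G : Ω → H} {B_G : ℝ}
    (hG : IsBesselMapping μ G B_G) {TF TG : Lp ℂ 2 μ →L[ℂ] H}
    (hTF : IsSynthesisOperator μ F TF) (hTG : IsSynthesisOperator μ G TG)
    (hε : ‖(1 : H →L[ℂ] H) - TG ∘L ContinuousLinearMap.adjoint TF‖ ≤ 1) (f : H) :
    B_G⁻¹ * (1 - ‖(1 : H →L[ℂ] H) - TG ∘L ContinuousLinearMap.adjoint TF‖) ^ 2 * ‖f‖ ^ 2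
      ≤ ∫ ω, ‖(inner ℂ f (F ω) : ℂ)‖ ^ 2 ∂μ := by
  rw [hTF.integral_norm_inner_sq]
  exact ContinuousLinearMap.inv_mul_one_sub_norm_one_sub_comp_sq_le _ TG
    (hG.norm_synthesis_le_sqrt hTG) hε f

end Frames

/-- if `F` and `G` are approximately dual continuous frames with Bessel
bounds `B_F`, `B_G`, then `F` is a continuous frame with lower bound
`B_G⁻¹ (1 - ‖I - T_G T_F*‖)²` and `G` with lower bound `B_F⁻¹ (1 - ‖I - T_G T_F*‖)²`. -/
theorem statement10 {μ : Measure Ω} (F G : Ω → H) (B_F B_G : ℝ)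
    (hF : IsBesselMapping μ F B_F) (hG : IsBesselMapping μ G B_G)
    (TF TG : Lp ℂ 2 μ →L[ℂ] H)
    (hTF : IsSynthesisOperator μ F TF) (hTG : IsSynthesisOperator μ G TG)
    (happrox : ‖(1 : H →L[ℂ] H) - TG ∘L ContinuousLinearMap.adjoint TF‖ < 1) :
    (∀ f : H, B_G⁻¹ * (1 - ‖(1 : H →L[ℂ] H) - TG ∘L ContinuousLinearMap.adjoint TF‖) ^ 2
        * ‖f‖ ^ 2 ≤ ∫ ω, ‖(inner ℂ f (F ω) : ℂ)‖ ^ 2 ∂μ) ∧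
    (∀ f : H, B_F⁻¹ * (1 - ‖(1 : H →L[ℂ] H) - TG ∘L ContinuousLinearMap.adjoint TF‖) ^ 2
        * ‖f‖ ^ 2 ≤ ∫ ω, ‖(inner ℂ f (G ω) : ℂ)‖ ^ 2 ∂μ) := by
  have hsymm := ContinuousLinearMap.norm_one_sub_comp_adjoint_comm TG TF
  refine ⟨lower_frame_bound_of_approx_dual hG hTF hTG happrox.le, fun f => ?_⟩
  rw [hsymm]
  exact lower_frame_bound_of_approx_dual hF hTG hTF (hsymm ▸ happrox.le) f
end
end

section
/- Let F be a continuous frame for H with frame operator S_F (which is invertible, with positive invertible square root S_F^{1/2}). A Bessel mapping G : Ω → H and F are approximately dual continuous frames if and only if there exist a bounded operator D on H with ‖I_H − S_F^{1/2} D‖ < 1 and a Bessel mapping K : Ω → H with T_F T_K* = 0 such that G(ω) = D* S_F^{−1/2} F(ω) + K(ω) for all ω ∈ Ω. -/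
open MeasureTheory
open scoped ENNReal

noncomputable section

variable {H : Type*} [NormedAddCommGroup H] [InnerProductSpace ℂ H] [CompleteSpace H]
variable {Ω : Type*} [MeasurableSpace Ω]

/-!
Write `M = D* S_F^{-1/2}`. Since a synthesis operator is determined by its mapping, the
decomposition `G = M F + K` with `T_F T_K* = 0` forces `T_G = M T_F + T_K`, hence
`T_G T_F* = M S_F = D* S_F^{1/2}`, and `I - T_G T_F*` is the adjoint of `I - S_F^{1/2} D`.
Conversely, `D = S_F^{-1/2} T_F T_G*` gives `S_F^{1/2} D = T_F T_G*`, and `K = G - M F` has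
`T_F T_K* = T_F T_G* - S_F M* = T_F T_G* - S_F^{1/2} D = 0`.
-/

open ContinuousLinearMap

lemma IsSelfAdjoint.of_mul_eq_one {M : Type*} [Monoid M] [StarMul M] {a b : M}
    (ha : IsSelfAdjoint a) (hab : a * b = 1) : IsSelfAdjoint b := by
  have hba : star b * a = 1 := by rw [← ha.star_eq, ← star_mul, hab, star_one]
  calc star b = star b * (a * b) := by rw [hab, mul_one]
    _ = b := by rw [← mul_assoc, hba, one_mul]

lemma ContinuousLinearMap.norm_one_sub_comp_adjoint_comm_s15 {𝕜 E F : Type*} [RCLike 𝕜]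
    [NormedAddCommGroup E] [InnerProductSpace 𝕜 E] [CompleteSpace E]
    [NormedAddCommGroup F] [InnerProductSpace 𝕜 F] [CompleteSpace F] (A B : E →L[𝕜] F) :
    ‖(1 : F →L[𝕜] F) - A ∘L adjoint B‖ = ‖(1 : F →L[𝕜] F) - B ∘L adjoint A‖ := by
  rw [← LinearIsometryEquiv.norm_map adjoint, map_sub, adjoint_comp, adjoint_adjoint, adjoint_one]

lemma MeasureTheory.L2.integral_norm_sq_eq {α : Type*} [MeasurableSpace α] {μ : Measure α}
    (ψ : Lp ℂ 2 μ) : ∫ ω, ‖ψ ω‖ ^ 2 ∂μ = ‖ψ‖ ^ 2 := by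
  rw [← inner_self_eq_norm_sq (𝕜 := ℂ) ψ, L2.inner_def, ← integral_re (L2.integrable_inner ψ ψ)]
  simp_rw [inner_self_eq_norm_sq]

namespace WeaklyMeasurableMap

variable {F G : Ω → H}

omit [CompleteSpace H] in
lemma sub (hF : WeaklyMeasurableMap F) (hG : WeaklyMeasurableMap G) :
    WeaklyMeasurableMap fun ω => F ω - G ω := fun f => by
  simp only [inner_sub_right]
  exact (hF f).sub (hG f)

lemma clm_apply (hF : WeaklyMeasurableMap F) (M : H →L[ℂ] H) :
    WeaklyMeasurableMap fun ω => M (F ω) := fun f => by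
  simpa only [adjoint_inner_left] using hF (adjoint M f)

end WeaklyMeasurableMap

namespace IsSynthesisOperator

variable {μ : Measure Ω} {F G : Ω → H} {T S : Lp ℂ 2 μ →L[ℂ] H}

lemma add (hT : IsSynthesisOperator μ F T) (hS : IsSynthesisOperator μ G S) :
    IsSynthesisOperator μ (fun ω => F ω + G ω) (T + S) := fun f => by
  filter_upwards [Lp.coeFn_add (adjoint T f) (adjoint S f), hT f, hS f] with ω hTS hTω hSω
  rw [map_add, add_apply, hTS, Pi.add_apply, hTω, hSω, inner_add_right]

lemma sub (hT : IsSynthesisOperator μ F T) (hS : IsSynthesisOperator μ G S) :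
    IsSynthesisOperator μ (fun ω => F ω - G ω) (T - S) := fun f => by
  filter_upwards [Lp.coeFn_sub (adjoint T f) (adjoint S f), hT f, hS f] with ω hTS hTω hSω
  rw [map_sub, sub_apply, hTS, Pi.sub_apply, hTω, hSω, inner_sub_right]

lemma clm_comp (hT : IsSynthesisOperator μ F T) (M : H →L[ℂ] H) :
    IsSynthesisOperator μ (fun ω => M (F ω)) (M ∘L T) := fun f => by
  filter_upwards [hT (adjoint M f)] with ω hω
  rw [adjoint_comp, comp_apply, hω, adjoint_inner_left]

lemma unique (hT : IsSynthesisOperator μ F T) (hS : IsSynthesisOperator μ F S) : T = S :=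
  adjoint.injective <| ext fun f => Lp.ext <| (hT f).trans (hS f).symm

lemma isBesselMapping (hT : IsSynthesisOperator μ F T) (hF : WeaklyMeasurableMap F) :
    IsBesselMapping μ F (‖adjoint T‖ ^ 2) := by
  refine ⟨hF, fun f => ?_⟩
  calc ∫ ω, ‖(inner ℂ f (F ω) : ℂ)‖ ^ 2 ∂μ = ∫ ω, ‖adjoint T f ω‖ ^ 2 ∂μ :=
        integral_congr_ae <| (hT f).mono fun ω hω => congrArg (‖·‖ ^ 2) hω.symm
    _ = ‖adjoint T f‖ ^ 2 := L2.integral_norm_sq_eq _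
    _ ≤ (‖adjoint T‖ * ‖f‖) ^ 2 := by gcongr; exact le_opNorm _ f
    _ = ‖adjoint T‖ ^ 2 * ‖f‖ ^ 2 := mul_pow _ _ _

end IsSynthesisOperator

section ApproximateDuals

variable {μ : Measure Ω} {F G : Ω → H} {TF TG : Lp ℂ 2 μ →L[ℂ] H} {R Rinv : H →L[ℂ] H}

theorem exists_decomposition_of_norm_one_sub_lt_one (hFm : WeaklyMeasurableMap F)
    (hGm : WeaklyMeasurableMap G) (hTF : IsSynthesisOperator μ F TF)
    (hTG : IsSynthesisOperator μ G TG) (hR : IsSelfAdjoint R)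
    (hRsq : R ∘L R = TF ∘L adjoint TF) (hRinv : R ∘L Rinv = 1)
    (h : ‖(1 : H →L[ℂ] H) - TG ∘L adjoint TF‖ < 1) :
    ∃ D : H →L[ℂ] H, ‖(1 : H →L[ℂ] H) - R ∘L D‖ < 1 ∧
      ∃ (K : Ω → H) (B_K : ℝ) (TK : Lp ℂ 2 μ →L[ℂ] H),
        IsBesselMapping μ K B_K ∧ IsSynthesisOperator μ K TK ∧ TF ∘L adjoint TK = 0 ∧
        ∀ ω : Ω, G ω = adjoint D (Rinv (F ω)) + K ω := by
  set D := Rinv ∘L TF ∘L adjoint TG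
  set M := adjoint D ∘L Rinv
  have hRD : R ∘L D = TF ∘L adjoint TG := by
    rw [← comp_assoc, hRinv, one_def, id_comp]
  have hTK : IsSynthesisOperator μ (fun ω => G ω - M (F ω)) (TG - M ∘L TF) :=
    hTG.sub (hTF.clm_comp M)
  refine ⟨D, ?_, _, _, _, hTK.isBesselMapping (hGm.sub (hFm.clm_apply M)), hTK, ?_,
    fun ω => (add_sub_cancel _ _).symm⟩
  · rwa [hRD, norm_one_sub_comp_adjoint_comm_s15]
  · calc TF ∘L adjoint (TG - M ∘L TF)
        = TF ∘L adjoint TG - R ∘L (R ∘L Rinv) ∘L D := by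
          rw [map_sub, adjoint_comp, comp_sub, ← comp_assoc, ← hRsq, adjoint_comp,
            adjoint_adjoint, (hR.of_mul_eq_one hRinv).adjoint_eq]
          rfl
      _ = 0 := by rw [hRinv, one_def, id_comp, hRD, sub_self]

theorem norm_one_sub_lt_one_of_decomposition (hTF : IsSynthesisOperator μ F TF)
    (hTG : IsSynthesisOperator μ G TG) (hR : IsSelfAdjoint R)
    (hRsq : R ∘L R = TF ∘L adjoint TF) (hRinv : Rinv ∘L R = 1) {D : H →L[ℂ] H}
    (hD : ‖(1 : H →L[ℂ] H) - R ∘L D‖ < 1) {K : Ω → H} {TK : Lp ℂ 2 μ →L[ℂ] H}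
    (hTK : IsSynthesisOperator μ K TK) (hFK : TF ∘L adjoint TK = 0)
    (hG : ∀ ω : Ω, G ω = adjoint D (Rinv (F ω)) + K ω) :
    ‖(1 : H →L[ℂ] H) - TG ∘L adjoint TF‖ < 1 := by
  have hTG_eq : TG = (adjoint D ∘L Rinv) ∘L TF + TK :=
    hTG.unique <| funext hG ▸ (hTF.clm_comp _).add hTK
  have hKF : TK ∘L adjoint TF = 0 := by
    simpa only [adjoint_comp, adjoint_adjoint, map_zero] using congrArg adjoint hFK
  calc ‖(1 : H →L[ℂ] H) - TG ∘L adjoint TF‖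
      = ‖(1 : H →L[ℂ] H) - adjoint D ∘L adjoint R‖ := by
        rw [hTG_eq, add_comp, hKF, add_zero, comp_assoc, ← hRsq, comp_assoc, ← comp_assoc Rinv,
          hRinv, one_def, id_comp, hR.adjoint_eq]
    _ = ‖(1 : H →L[ℂ] H) - R ∘L D‖ := by
        rw [norm_one_sub_comp_adjoint_comm_s15, adjoint_adjoint]
    _ < 1 := hD

end ApproximateDuals

/-- for a continuous frame `F` with invertible frame operator
`S_F = R ∘ R` (where `R = S_F^{1/2}` is positive and invertible with inverse `Rinv`),
a Bessel mapping `G` and `F` are approximately dual iff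
`G = D* S_F^{-1/2} F + K` for some bounded `D` with `‖I - S_F^{1/2} D‖ < 1` and some
Bessel mapping `K` with `T_F T_K* = 0`. -/
theorem statement15 {μ : Measure Ω} (F G : Ω → H) (A_F B_F B_G : ℝ)
    (hF : IsContinuousFrame μ F A_F B_F) (hG : IsBesselMapping μ G B_G)
    (TF TG : Lp ℂ 2 μ →L[ℂ] H)
    (hTF : IsSynthesisOperator μ F TF) (hTG : IsSynthesisOperator μ G TG)
    (R Rinv : H →L[ℂ] H) (hRpos : R.IsPositive)
    (hRsq : R ∘L R = TF ∘L ContinuousLinearMap.adjoint TF)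
    (hRinv1 : R ∘L Rinv = 1) (hRinv2 : Rinv ∘L R = 1) :
    ‖(1 : H →L[ℂ] H) - TG ∘L ContinuousLinearMap.adjoint TF‖ < 1 ↔
      ∃ D : H →L[ℂ] H, ‖(1 : H →L[ℂ] H) - R ∘L D‖ < 1 ∧
        ∃ (K : Ω → H) (B_K : ℝ) (TK : Lp ℂ 2 μ →L[ℂ] H),
          IsBesselMapping μ K B_K ∧ IsSynthesisOperator μ K TK ∧
          TF ∘L ContinuousLinearMap.adjoint TK = 0 ∧
          ∀ ω : Ω, G ω = ContinuousLinearMap.adjoint D (Rinv (F ω)) + K ω := by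
  have hR : IsSelfAdjoint R := hRpos.isSelfAdjoint
  refine ⟨exists_decomposition_of_norm_one_sub_lt_one hF.1 hG.1 hTF hTG hR hRsq hRinv1, ?_⟩
  rintro ⟨D, hD, K, -, TK, -, hTK, hFK, hGK⟩
  exact norm_one_sub_lt_one_of_decomposition hTF hTG hR hRsq hRinv2 hD hTK hFK hGK
end
end
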